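/- arXiv:1807.03277 — 6 statements merged into one kernel-verified Lean document; each statement's English description precedes it below -/
import Mathlib

section
/- Let R ∈ IRel_m, S ∈ IRel_n and T ∈ IRel_{m+n}. The following are equivalent: (a) T ∈ R ⧢ S; (b) T_{[m]} = R and T_{[n̄]} = S, where [n̄] = {m+1,…,m+n}; (c) underprod(R,S) ≼ T ≼ overprod(R,S) in the weak order on IRel_{m+n}. -/
namespace IntegerRelations

/-- An integer relation of size `p` is a reflexive binary relation on `Fin p`,
encoded as a set of pairs; `IsIRel R` says that `R` is reflexive. -/
def IsIRel {p : ℕ} (R : Set (Fin p × Fin p)) : Prop :=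
  ∀ i : Fin p, (i, i) ∈ R

/-- The increasing subrelation `Inc R`. -/
def inc {p : ℕ} (R : Set (Fin p × Fin p)) : Set (Fin p × Fin p) :=
  {x ∈ R | x.1 < x.2}

/-- The decreasing subrelation `Dec R`. -/
def dec {p : ℕ} (R : Set (Fin p × Fin p)) : Set (Fin p × Fin p) :=
  {x ∈ R | x.2 < x.1}

/-- The weak order: `R ≼ S` iff `Inc R ⊇ Inc S` and `Dec R ⊆ Dec S`. -/
def WOle {p : ℕ} (R S : Set (Fin p × Fin p)) : Prop :=
  inc S ⊆ inc R ∧ dec R ⊆ dec S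

/-- Standardized restriction of a relation to a subset `X` of cardinality `k`. -/
def restrict {p k : ℕ} (R : Set (Fin p × Fin p)) (X : Finset (Fin p))
    (h : X.card = k) : Set (Fin k × Fin k) :=
  {x | ((X.orderIsoOfFin h x.1 : Fin p), (X.orderIsoOfFin h x.2 : Fin p)) ∈ R}

/-- Standardized restriction of a relation to the block of `k` consecutive
positions starting at offset `o` (`0`-indexed). -/
def restrictRange {p : ℕ} (R : Set (Fin p × Fin p)) (o k : ℕ) :
    Set (Fin k × Fin k) :=
  {x | ∃ (h₁ : o + (x.1 : ℕ) < p) (h₂ : o + (x.2 : ℕ) < p),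
      ((⟨o + (x.1 : ℕ), h₁⟩ : Fin p), (⟨o + (x.2 : ℕ), h₂⟩ : Fin p)) ∈ R}

/-- The relation `R` placed on the first `m` values of `[m+n]`. -/
def shiftL {m n : ℕ} (R : Set (Fin m × Fin m)) :
    Set (Fin (m + n) × Fin (m + n)) :=
  {x | ∃ y ∈ R, x = (Fin.castAdd n y.1, Fin.castAdd n y.2)}

/-- The relation `S` shifted to the last `n` values of `[m+n]`. -/
def shiftR {m n : ℕ} (S : Set (Fin n × Fin n)) :
    Set (Fin (m + n) × Fin (m + n)) :=
  {x | ∃ y ∈ S, x = (Fin.natAdd m y.1, Fin.natAdd m y.2)}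

/-- The full block `[m] × [n̄]`. -/
def lowHigh (m n : ℕ) : Set (Fin (m + n) × Fin (m + n)) :=
  {x | (x.1 : ℕ) < m ∧ m ≤ (x.2 : ℕ)}

/-- The full block `[n̄] × [m]`. -/
def highLow (m n : ℕ) : Set (Fin (m + n) × Fin (m + n)) :=
  {x | m ≤ (x.1 : ℕ) ∧ (x.2 : ℕ) < m}

/-- The shifted shuffle `R ⧢ S` of two integer relations. -/
def shiftedShuffle {m n : ℕ} (R : Set (Fin m × Fin m)) (S : Set (Fin n × Fin n)) :
    Set (Set (Fin (m + n) × Fin (m + n))) :=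
  {T | ∃ I D : Set (Fin (m + n) × Fin (m + n)),
      I ⊆ lowHigh m n ∧ D ⊆ highLow m n ∧
      T = shiftL R ∪ shiftR S ∪ I ∪ D}

/-- `underprod R S = R ∪ S̄ ∪ ([m] × [n̄])`. -/
def underprod {m n : ℕ} (R : Set (Fin m × Fin m)) (S : Set (Fin n × Fin n)) :
    Set (Fin (m + n) × Fin (m + n)) :=
  shiftL R ∪ shiftR S ∪ lowHigh m n

/-- `overprod R S = R ∪ S̄ ∪ ([n̄] × [m])`. -/
def overprod {m n : ℕ} (R : Set (Fin m × Fin m)) (S : Set (Fin n × Fin n)) :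
    Set (Fin (m + n) × Fin (m + n)) :=
  shiftL R ∪ shiftR S ∪ highLow m n

/-- A total cut `(X, Y)` of a relation `T`. -/
def IsTotalCut {p : ℕ} (T : Set (Fin p × Fin p)) (X Y : Finset (Fin p)) : Prop :=
  (∀ i : Fin p, i ∈ X ∨ i ∈ Y) ∧ Disjoint X Y ∧
    ∀ x ∈ X, ∀ y ∈ Y, (x, y) ∈ T ∧ (y, x) ∉ T

/-- The convolution `R ∗ S` of two integer relations. -/
def convolution {m n : ℕ} (R : Set (Fin m × Fin m)) (S : Set (Fin n × Fin n)) :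
    Set (Set (Fin (m + n) × Fin (m + n))) :=
  {T | ∃ (X Y : Finset (Fin (m + n))) (hX : X.card = m) (hY : Y.card = n),
      IsTotalCut T X Y ∧ restrict T X hX = R ∧ restrict T Y hY = S}

/-- An integer poset: a reflexive, antisymmetric and transitive integer relation. -/
def IsIPos {p : ℕ} (T : Set (Fin p × Fin p)) : Prop :=
  IsIRel T ∧ (∀ a b : Fin p, (a, b) ∈ T → (b, a) ∈ T → a = b) ∧
    ∀ a b c : Fin p, (a, b) ∈ T → (b, c) ∈ T → (a, c) ∈ T

/-- A total order: an integer poset in which any two elements are comparable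
(these are exactly the weak order element posets, `WOEP`). -/
def IsITotal {p : ℕ} (T : Set (Fin p × Fin p)) : Prop :=
  IsIPos T ∧ ∀ a b : Fin p, (a, b) ∈ T ∨ (b, a) ∈ T

/-- `T` admits a primitive cut at `k` (here positions are `0`-indexed, so the
`1`-indexed condition `i ≤ k < j` reads `i < k ≤ j`). -/
def HasPrimitiveCutAt {p : ℕ} (T : Set (Fin p × Fin p)) (k : ℕ) : Prop :=
  ∀ i j : Fin p, (i : ℕ) < k → k ≤ (j : ℕ) → (i, j) ∈ T ∧ (j, i) ∉ T

/-- `T` is under-indecomposable: no non-trivial primitive cut. -/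
def UnderIndecomposable {p : ℕ} (T : Set (Fin p × Fin p)) : Prop :=
  ∀ k : ℕ, 0 < k → k < p → ¬ HasPrimitiveCutAt T k

/-- Membership in `IWOIP`. -/
def InIWOIP {p : ℕ} (T : Set (Fin p × Fin p)) : Prop :=
  IsIPos T ∧ ∀ a b c : Fin p, a < b → b < c → (a, c) ∈ T → (a, b) ∈ T ∨ (b, c) ∈ T

/-- Membership in `DWOIP`. -/
def InDWOIP {p : ℕ} (T : Set (Fin p × Fin p)) : Prop :=
  IsIPos T ∧ ∀ a b c : Fin p, a < b → b < c → (c, a) ∈ T → (b, a) ∈ T ∨ (c, b) ∈ T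

/-- Membership in `WOIP = IWOIP ∩ DWOIP`. -/
def InWOIP {p : ℕ} (T : Set (Fin p × Fin p)) : Prop := InIWOIP T ∧ InDWOIP T

/-- Membership in `WOFP`. -/
def InWOFP {p : ℕ} (T : Set (Fin p × Fin p)) : Prop :=
  InWOIP T ∧ ∀ a b c : Fin p, a < b → b < c → (a, c) ∉ T → (c, a) ∉ T →
    (((a, b) ∈ T ↔ (c, b) ∈ T) ∧ ((b, a) ∈ T ↔ (b, c) ∈ T))

/-- The `IWOIP` increasing deletion. -/
def IWOIPid {p : ℕ} (T : Set (Fin p × Fin p)) : Set (Fin p × Fin p) :=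
  T \ {x | x.1 < x.2 ∧ ∃ l : List (Fin p), l ≠ [] ∧
      List.Chain (fun a b : Fin p => a < b ∧ (a, b) ∉ T) x.1 (l ++ [x.2])}

/-- The `DWOIP` decreasing deletion. -/
def DWOIPdd {p : ℕ} (T : Set (Fin p × Fin p)) : Set (Fin p × Fin p) :=
  T \ {x | x.2 < x.1 ∧ ∃ l : List (Fin p), l ≠ [] ∧
      List.Chain (fun a b : Fin p => a < b ∧ (b, a) ∉ T) x.2 (l ++ [x.1])}

/-- The `WOIP` deletion. -/
def WOIPd {p : ℕ} (T : Set (Fin p × Fin p)) : Set (Fin p × Fin p) :=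
  IWOIPid (DWOIPdd T)

/-- The chain poset `≺_σ` of a permutation: `u ≺_σ v` iff `σ⁻¹ u ≤ σ⁻¹ v`. -/
def chainPoset {p : ℕ} (σ : Equiv.Perm (Fin p)) : Set (Fin p × Fin p) :=
  {x | σ.symm x.1 ≤ σ.symm x.2}

/-- The shifted shuffle of two permutations. -/
def permShiftedShuffle {m n : ℕ} (σ : Equiv.Perm (Fin m)) (τ : Equiv.Perm (Fin n)) :
    Set (Equiv.Perm (Fin (m + n))) :=
  {ρ | (∀ u v : Fin m,
        ρ.symm (Fin.castAdd n u) < ρ.symm (Fin.castAdd n v) ↔ σ.symm u < σ.symm v) ∧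
      ∀ u v : Fin n,
        ρ.symm (Fin.natAdd m u) < ρ.symm (Fin.natAdd m v) ↔ τ.symm u < τ.symm v}

/-- The convolution of two permutations. -/
def permConvolution {m n : ℕ} (σ : Equiv.Perm (Fin m)) (τ : Equiv.Perm (Fin n)) :
    Set (Equiv.Perm (Fin (m + n))) :=
  {ρ | (∀ i j : Fin m, ρ (Fin.castAdd n i) < ρ (Fin.castAdd n j) ↔ σ i < σ j) ∧
      ∀ i j : Fin n, ρ (Fin.natAdd m i) < ρ (Fin.natAdd m j) ↔ τ i < τ j}

/-- Relabelling of a relation along a bijection. -/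
def relabel {p q : ℕ} (e : Fin p ≃ Fin q) (T : Set (Fin p × Fin p)) :
    Set (Fin q × Fin q) :=
  {x | (e.symm x.1, e.symm x.2) ∈ T}

/-- The diagonal `Δ_p`. -/
def diagonal (p : ℕ) : Set (Fin p × Fin p) := {x | x.1 = x.2}


section Aux
variable {m n : ℕ}

lemma mem_shiftL_iff {R : Set (Fin m × Fin m)} {i j : Fin m} :
    (Fin.castAdd n i, Fin.castAdd n j) ∈ shiftL R ↔ (i, j) ∈ R := by
  constructor
  · rintro ⟨⟨a, b⟩, hy, h⟩
    have h1 : i = a := Fin.ext (by simpa using congrArg (fun z => (z.1 : ℕ)) h)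
    have h2 : j = b := Fin.ext (by simpa using congrArg (fun z => (z.2 : ℕ)) h)
    subst h1; subst h2; exact hy
  · intro h; exact ⟨(i, j), h, rfl⟩

lemma mem_shiftR_iff {S : Set (Fin n × Fin n)} {i j : Fin n} :
    (Fin.natAdd m i, Fin.natAdd m j) ∈ shiftR S ↔ (i, j) ∈ S := by
  constructor
  · rintro ⟨⟨a, b⟩, hy, h⟩
    have h1 : i = a := Fin.ext (by
      have := congrArg (fun z => ((z.1 : Fin (m + n)) : ℕ)) h
      simp at this; omega)
    have h2 : j = b := Fin.ext (by
      have := congrArg (fun z => ((z.2 : Fin (m + n)) : ℕ)) h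
      simp at this; omega)
    subst h1; subst h2; exact hy
  · intro h; exact ⟨(i, j), h, rfl⟩

lemma shiftL_val {R : Set (Fin m × Fin m)} {x : Fin (m + n) × Fin (m + n)}
    (h : x ∈ shiftL R) : (x.1 : ℕ) < m ∧ (x.2 : ℕ) < m := by
  obtain ⟨y, -, rfl⟩ := h
  exact ⟨y.1.isLt, y.2.isLt⟩

lemma shiftR_val {S : Set (Fin n × Fin n)} {x : Fin (m + n) × Fin (m + n)}
    (h : x ∈ shiftR S) : m ≤ (x.1 : ℕ) ∧ m ≤ (x.2 : ℕ) := by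
  obtain ⟨y, -, rfl⟩ := h
  exact ⟨Nat.le_add_right m _, Nat.le_add_right m _⟩

lemma fin_split (x : Fin (m + n)) :
    (∃ i : Fin m, x = Fin.castAdd n i) ∨ (∃ i : Fin n, x = Fin.natAdd m i) := by
  rcases lt_or_ge (x : ℕ) m with h | h
  · exact Or.inl ⟨⟨x, h⟩, Fin.ext rfl⟩
  · have hx := x.isLt
    exact Or.inr ⟨⟨(x : ℕ) - m, by omega⟩, Fin.ext (by simp; omega)⟩

lemma lo_lt_lo {i j : Fin m} : Fin.castAdd n i < Fin.castAdd n j ↔ i < j := by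
  rw [Fin.lt_def, Fin.lt_def]; simp

lemma hi_lt_hi {i j : Fin n} :
    Fin.natAdd m i < Fin.natAdd m j ↔ i < j := by
  rw [Fin.lt_def, Fin.lt_def]; simp

lemma mem_restrictRange_zero {T : Set (Fin (m + n) × Fin (m + n))} {i j : Fin m} :
    (i, j) ∈ restrictRange T 0 m ↔ (Fin.castAdd n i, Fin.castAdd n j) ∈ T := by
  have e1 : ∀ (k : Fin m) (h : 0 + (k : ℕ) < m + n),
      (⟨0 + (k : ℕ), h⟩ : Fin (m + n)) = Fin.castAdd n k := by
    intro k h; exact Fin.ext (by simp)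
  constructor
  · rintro ⟨h₁, h₂, h⟩
    rwa [e1 i h₁, e1 j h₂] at h
  · intro h
    have h₁ : 0 + (i : ℕ) < m + n := by have := i.isLt; omega
    have h₂ : 0 + (j : ℕ) < m + n := by have := j.isLt; omega
    exact ⟨h₁, h₂, by rwa [e1 i h₁, e1 j h₂]⟩

lemma mem_restrictRange_m {T : Set (Fin (m + n) × Fin (m + n))} {i j : Fin n} :
    (i, j) ∈ restrictRange T m n ↔ (Fin.natAdd m i, Fin.natAdd m j) ∈ T := by
  have e1 : ∀ (k : Fin n) (h : m + (k : ℕ) < m + n),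
      (⟨m + (k : ℕ), h⟩ : Fin (m + n)) = Fin.natAdd m k := by
    intro k h; exact Fin.ext (by simp)
  constructor
  · rintro ⟨h₁, h₂, h⟩
    rwa [e1 i h₁, e1 j h₂] at h
  · intro h
    have h₁ : m + (i : ℕ) < m + n := by have := i.isLt; omega
    have h₂ : m + (j : ℕ) < m + n := by have := j.isLt; omega
    exact ⟨h₁, h₂, by rwa [e1 i h₁, e1 j h₂]⟩

end Aux

/-- characterization of the shifted shuffle. -/
theorem mem_shiftedShuffle_characterization (m n : ℕ)
    (R : Set (Fin m × Fin m)) (S : Set (Fin n × Fin n))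
    (T : Set (Fin (m + n) × Fin (m + n)))
    (hR : IsIRel R) (hS : IsIRel S) (hT : IsIRel T) :
    (T ∈ shiftedShuffle R S ↔
      (restrictRange T 0 m = R ∧ restrictRange T m n = S)) ∧
    (T ∈ shiftedShuffle R S ↔
      (WOle (underprod R S) T ∧ WOle T (overprod R S))) := by

  have P1iff : restrictRange T 0 m = R ↔
      (∀ i j : Fin m, ((Fin.castAdd n i, Fin.castAdd n j) ∈ T ↔ (i, j) ∈ R)) := by
    rw [Set.ext_iff]
    constructor
    · intro h i j
      exact mem_restrictRange_zero.symm.trans (h (i, j))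
    · rintro h ⟨i, j⟩
      exact mem_restrictRange_zero.trans (h i j)
  have P2iff : restrictRange T m n = S ↔
      (∀ i j : Fin n, ((Fin.natAdd m i, Fin.natAdd m j) ∈ T ↔ (i, j) ∈ S)) := by
    rw [Set.ext_iff]
    constructor
    · intro h i j
      exact mem_restrictRange_m.symm.trans (h (i, j))
    · rintro h ⟨i, j⟩
      exact mem_restrictRange_m.trans (h i j)
  have main : T ∈ shiftedShuffle R S ↔
      ((∀ i j : Fin m, ((Fin.castAdd n i, Fin.castAdd n j) ∈ T ↔ (i, j) ∈ R)) ∧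
       (∀ i j : Fin n, ((Fin.natAdd m i, Fin.natAdd m j) ∈ T ↔ (i, j) ∈ S))) := by
    constructor
    · rintro ⟨I, D, hI, hD, rfl⟩
      constructor
      · intro i j
        constructor
        · rintro (((h | h) | h) | h)
          · exact mem_shiftL_iff.mp h
          · have := (shiftR_val h).1
            simp at this
            exact absurd this (by omega)
          · have := (hI h).2
            simp [lowHigh] at this
            exact absurd this (by omega)
          · have := (hD h).1
            simp [highLow] at this
            exact absurd this (by omega)
        · intro h
          exact Or.inl (Or.inl (Or.inl (mem_shiftL_iff.mpr h)))
      · intro i j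
        constructor
        · rintro (((h | h) | h) | h)
          · have := (shiftL_val h).1
            simp at this
          · exact mem_shiftR_iff.mp h
          · have := (hI h).1
            simp [lowHigh] at this
          · have := (hD h).2
            simp [highLow] at this
        · intro h
          exact Or.inl (Or.inl (Or.inr (mem_shiftR_iff.mpr h)))
    · rintro ⟨h1, h2⟩
      refine ⟨T ∩ lowHigh m n, T ∩ highLow m n,
        Set.inter_subset_right, Set.inter_subset_right, ?_⟩
      ext ⟨x, y⟩
      constructor
      · intro hxy
        rcases fin_split x with ⟨a, rfl⟩ | ⟨a, rfl⟩ <;>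
          rcases fin_split y with ⟨b, rfl⟩ | ⟨b, rfl⟩
        · exact Or.inl (Or.inl (Or.inl (mem_shiftL_iff.mpr ((h1 a b).mp hxy))))
        · exact Or.inl (Or.inr ⟨hxy, a.isLt, Nat.le_add_right m _⟩)
        · exact Or.inr ⟨hxy, Nat.le_add_right m _, b.isLt⟩
        · exact Or.inl (Or.inl (Or.inr (mem_shiftR_iff.mpr ((h2 a b).mp hxy))))
      · rintro (((h | h) | h) | h)
        · obtain ⟨⟨a, b⟩, hab, heq⟩ := h
          simp only [Prod.mk.injEq] at heq
          obtain ⟨rfl, rfl⟩ := heq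
          exact (h1 a b).mpr hab
        · obtain ⟨⟨a, b⟩, hab, heq⟩ := h
          simp only [Prod.mk.injEq] at heq
          obtain ⟨rfl, rfl⟩ := heq
          exact (h2 a b).mpr hab
        · exact h.1
        · exact h.1
  have woiff :
      ((∀ i j : Fin m, ((Fin.castAdd n i, Fin.castAdd n j) ∈ T ↔ (i, j) ∈ R)) ∧
       (∀ i j : Fin n, ((Fin.natAdd m i, Fin.natAdd m j) ∈ T ↔ (i, j) ∈ S))) ↔
      (WOle (underprod R S) T ∧ WOle T (overprod R S)) := by
    constructor
    · rintro ⟨h1, h2⟩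
      refine ⟨⟨?_, ?_⟩, ?_, ?_⟩
      · rintro ⟨x, y⟩ ⟨hT, hlt⟩
        refine ⟨?_, hlt⟩
        rcases fin_split x with ⟨a, rfl⟩ | ⟨a, rfl⟩ <;>
          rcases fin_split y with ⟨b, rfl⟩ | ⟨b, rfl⟩
        · exact Or.inl (Or.inl (mem_shiftL_iff.mpr ((h1 a b).mp hT)))
        · exact Or.inr ⟨a.isLt, Nat.le_add_right m _⟩
        · exfalso
          have hb := b.isLt
          simp [Fin.lt_def] at hlt
          omega
        · exact Or.inl (Or.inr (mem_shiftR_iff.mpr ((h2 a b).mp hT)))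
      · rintro ⟨x, y⟩ ⟨hU, hlt⟩
        refine ⟨?_, hlt⟩
        rcases hU with (h | h) | h
        · obtain ⟨⟨a, b⟩, hab, heq⟩ := h
          simp only [Prod.mk.injEq] at heq
          obtain ⟨rfl, rfl⟩ := heq
          exact (h1 a b).mpr hab
        · obtain ⟨⟨a, b⟩, hab, heq⟩ := h
          simp only [Prod.mk.injEq] at heq
          obtain ⟨rfl, rfl⟩ := heq
          exact (h2 a b).mpr hab
        · exfalso
          simp only [lowHigh, Set.mem_setOf_eq] at h
          simp only [Fin.lt_def] at hlt
          omega
      · rintro ⟨x, y⟩ ⟨hO, hlt⟩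
        refine ⟨?_, hlt⟩
        rcases hO with (h | h) | h
        · obtain ⟨⟨a, b⟩, hab, heq⟩ := h
          simp only [Prod.mk.injEq] at heq
          obtain ⟨rfl, rfl⟩ := heq
          exact (h1 a b).mpr hab
        · obtain ⟨⟨a, b⟩, hab, heq⟩ := h
          simp only [Prod.mk.injEq] at heq
          obtain ⟨rfl, rfl⟩ := heq
          exact (h2 a b).mpr hab
        · exfalso
          simp only [highLow, Set.mem_setOf_eq] at h
          simp only [Fin.lt_def] at hlt
          omega
      · rintro ⟨x, y⟩ ⟨hT, hlt⟩
        refine ⟨?_, hlt⟩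
        rcases fin_split x with ⟨a, rfl⟩ | ⟨a, rfl⟩ <;>
          rcases fin_split y with ⟨b, rfl⟩ | ⟨b, rfl⟩
        · exact Or.inl (Or.inl (mem_shiftL_iff.mpr ((h1 a b).mp hT)))
        · exfalso
          have ha := a.isLt
          simp [Fin.lt_def] at hlt
          omega
        · exact Or.inr ⟨Nat.le_add_right m _, b.isLt⟩
        · exact Or.inl (Or.inr (mem_shiftR_iff.mpr ((h2 a b).mp hT)))
    · rintro ⟨⟨w1, w2⟩, w3, w4⟩
      constructor
      · intro i j
        rcases lt_trichotomy i j with hij | rfl | hij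
        · constructor
          · intro hT
            have := (w1 ⟨hT, lo_lt_lo.mpr hij⟩).1
            rcases this with (h | h) | h
            · exact mem_shiftL_iff.mp h
            · have := (shiftR_val h).1
              simp at this
              exact absurd this (by omega)
            · have := h.2
              simp [lowHigh] at this
              exact absurd this (by omega)
          · intro hR'
            exact (w3 ⟨Or.inl (Or.inl (mem_shiftL_iff.mpr hR')),
              lo_lt_lo.mpr hij⟩).1
        · exact iff_of_true (hT _) (hR i)
        · constructor
          · intro hT'
            have := (w4 ⟨hT', lo_lt_lo.mpr hij⟩).1
            rcases this with (h | h) | h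
            · exact mem_shiftL_iff.mp h
            · have := (shiftR_val h).1
              simp at this
              exact absurd this (by omega)
            · have := h.1
              simp [highLow] at this
              exact absurd this (by omega)
          · intro hR'
            exact (w2 ⟨Or.inl (Or.inl (mem_shiftL_iff.mpr hR')),
              lo_lt_lo.mpr hij⟩).1
      · intro i j
        rcases lt_trichotomy i j with hij | rfl | hij
        · constructor
          · intro hT'
            have := (w1 ⟨hT', hi_lt_hi.mpr hij⟩).1
            rcases this with (h | h) | h
            · have := (shiftL_val h).1
              simp at this
            · exact mem_shiftR_iff.mp h
            · have := h.1
              simp [lowHigh] at this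
          · intro hS'
            exact (w3 ⟨Or.inl (Or.inr (mem_shiftR_iff.mpr hS')),
              hi_lt_hi.mpr hij⟩).1
        · exact iff_of_true (hT _) (hS i)
        · constructor
          · intro hT'
            have := (w4 ⟨hT', hi_lt_hi.mpr hij⟩).1
            rcases this with (h | h) | h
            · have := (shiftL_val h).1
              simp at this
            · exact mem_shiftR_iff.mp h
            · have := h.2
              simp [highLow] at this
          · intro hS'
            exact (w2 ⟨Or.inl (Or.inr (mem_shiftR_iff.mpr hS')),
              hi_lt_hi.mpr hij⟩).1
  constructor
  · rw [main, P1iff, P2iff]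
  · rw [main]
    exact woiff


end IntegerRelations
end

section
/- Let R ∈ IRel_m, S ∈ IRel_n and T ∈ IRel_o. Then ⋃_{V ∈ R ⧢ S} (V ⧢ T) = ⋃_{W ∈ S ⧢ T} (R ⧢ W), and both sets consist exactly of the relations U ∈ IRel_{m+n+o} satisfying U_{{1,…,m}} = R, U_{{m+1,…,m+n}} = S and U_{{m+n+1,…,m+n+o}} = T. -/
namespace IntegerRelations

lemma mem_shuffle_iff {m n : ℕ} (R : Set (Fin m × Fin m)) (S : Set (Fin n × Fin n))
    (U : Set (Fin (m + n) × Fin (m + n))) :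
    U ∈ shiftedShuffle R S ↔ restrictRange U 0 m = R ∧ restrictRange U m n = S := by
  constructor
  · rintro ⟨I, D, hI, hD, rfl⟩
    constructor
    · ext ⟨a, b⟩
      simp only [restrictRange, Set.mem_setOf_eq]
      constructor
      · rintro ⟨h1, h2, hmem⟩
        rcases hmem with ((hm | hm) | hm) | hm
        · obtain ⟨⟨y1, y2⟩, hy, heq⟩ := hm
          obtain ⟨e1, e2⟩ := Prod.mk.injEq .. ▸ heq
          have ha : y1 = a := by
            apply Fin.ext
            have := congrArg Fin.val e1
            simpa using this.symm
          have hb : y2 = b := by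
            apply Fin.ext
            have := congrArg Fin.val e2
            simpa using this.symm
          rwa [ha, hb] at hy
        · obtain ⟨y, hy, heq⟩ := hm
          have := congrArg (Fin.val ∘ Prod.fst) heq
          simp [Fin.natAdd] at this
          omega
        · have := hI hm
          simp only [lowHigh, Set.mem_setOf_eq] at this
          omega
        · have := hD hm
          simp only [highLow, Set.mem_setOf_eq] at this
          omega
      · intro h
        refine ⟨by omega, by omega, ?_⟩
        left; left; left
        exact ⟨(a, b), h, by simp [Fin.castAdd, Fin.castLE, Fin.ext_iff]⟩
    · ext ⟨a, b⟩
      simp only [restrictRange, Set.mem_setOf_eq]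
      constructor
      · rintro ⟨h1, h2, hmem⟩
        rcases hmem with ((hm | hm) | hm) | hm
        · obtain ⟨y, hy, heq⟩ := hm
          have := congrArg (Fin.val ∘ Prod.fst) heq
          simp [Fin.castAdd, Fin.castLE] at this
          have hy1 := y.1.isLt
          omega
        · obtain ⟨⟨y1, y2⟩, hy, heq⟩ := hm
          obtain ⟨e1, e2⟩ := Prod.mk.injEq .. ▸ heq
          have ha : y1 = a := by
            apply Fin.ext
            have := congrArg Fin.val e1
            simp [Fin.natAdd] at this
            omega
          have hb : y2 = b := by
            apply Fin.ext
            have := congrArg Fin.val e2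
            simp [Fin.natAdd] at this
            omega
          rwa [ha, hb] at hy
        · have := hI hm
          simp only [lowHigh, Set.mem_setOf_eq] at this
          omega
        · have := hD hm
          simp only [highLow, Set.mem_setOf_eq] at this
          omega
      · intro h
        refine ⟨by omega, by omega, ?_⟩
        left; left; right
        exact ⟨(a, b), h, by simp [Fin.natAdd, Fin.ext_iff]⟩
  · rintro ⟨hRr, hSr⟩
    refine ⟨U ∩ lowHigh m n, U ∩ highLow m n, Set.inter_subset_right,
      Set.inter_subset_right, ?_⟩
    ext ⟨a, b⟩
    constructor
    · intro hab
      by_cases ha : (a : ℕ) < m <;> by_cases hb : (b : ℕ) < m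
      · left; left; left
        refine ⟨(⟨a, ha⟩, ⟨b, hb⟩), ?_, by simp [Fin.castAdd, Fin.castLE, Fin.ext_iff]⟩
        rw [← hRr]
        refine ⟨by omega, by omega, ?_⟩
        convert hab using 2 <;> exact Fin.ext (by simp)
      · left; right
        exact ⟨hab, ha, show m ≤ (b : ℕ) by omega⟩
      · right
        exact ⟨hab, show m ≤ (a : ℕ) by omega, hb⟩
      · left; left; right
        refine ⟨(⟨(a : ℕ) - m, by omega⟩, ⟨(b : ℕ) - m, by omega⟩), ?_,
          by simp [Fin.natAdd, Fin.ext_iff]; omega⟩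
        rw [← hSr]
        refine ⟨by omega, by omega, ?_⟩
        have e1 : (⟨m + ((a : ℕ) - m), by simp; omega⟩ : Fin (m + n)) = a := by
          simp [Fin.ext_iff]; omega
        have e2 : (⟨m + ((b : ℕ) - m), by simp; omega⟩ : Fin (m + n)) = b := by
          simp [Fin.ext_iff]; omega
        rw [e1, e2]; exact hab
    · rintro (((hm | hm) | hm) | hm)
      · obtain ⟨y, hy, heq⟩ := hm
        rw [← hRr] at hy
        obtain ⟨h1, h2, hu⟩ := hy
        have e1 : (⟨0 + (y.1 : ℕ), h1⟩ : Fin (m + n)) = a := by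
          have := congrArg (Fin.val ∘ Prod.fst) heq
          simp [Fin.castAdd, Fin.castLE, Fin.ext_iff] at this ⊢
          omega
        have e2 : (⟨0 + (y.2 : ℕ), h2⟩ : Fin (m + n)) = b := by
          have := congrArg (Fin.val ∘ Prod.snd) heq
          simp [Fin.castAdd, Fin.castLE, Fin.ext_iff] at this ⊢
          omega
        rwa [e1, e2] at hu
      · obtain ⟨y, hy, heq⟩ := hm
        rw [← hSr] at hy
        obtain ⟨h1, h2, hu⟩ := hy
        have e1 : (⟨m + (y.1 : ℕ), h1⟩ : Fin (m + n)) = a := by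
          have := congrArg (Fin.val ∘ Prod.fst) heq
          simp [Fin.natAdd, Fin.ext_iff] at this ⊢
          omega
        have e2 : (⟨m + (y.2 : ℕ), h2⟩ : Fin (m + n)) = b := by
          have := congrArg (Fin.val ∘ Prod.snd) heq
          simp [Fin.natAdd, Fin.ext_iff] at this ⊢
          omega
        rwa [e1, e2] at hu
      · exact hm.1
      · exact hm.1

lemma restrictRange_restrictRange {p : ℕ} (U : Set (Fin p × Fin p)) (o1 k o2 k2 : ℕ)
    (h1 : o1 + k ≤ p) (h2 : o2 + k2 ≤ k) :
    restrictRange (restrictRange U o1 k) o2 k2 = restrictRange U (o1 + o2) k2 := by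
  ext ⟨a, b⟩
  simp only [restrictRange, Set.mem_setOf_eq]
  constructor
  · rintro ⟨ha, hb, hA, hB, hu⟩
    refine ⟨by omega, by omega, ?_⟩
    convert hu using 2 <;> exact Fin.ext (by simp [Nat.add_assoc])
  · rintro ⟨ha, hb, hu⟩
    refine ⟨by omega, by omega, by omega, by omega, ?_⟩
    convert hu using 2 <;> exact Fin.ext (by simp [Nat.add_assoc])

lemma refl_of_restrict {p k oo : ℕ} {U : Set (Fin p × Fin p)} {R : Set (Fin k × Fin k)}
    (h : restrictRange U oo k = R) (hR : IsIRel R) (i : Fin p)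
    (h1 : oo ≤ (i : ℕ)) (h2 : (i : ℕ) < oo + k) : (i, i) ∈ U := by
  have hj := hR ⟨(i : ℕ) - oo, by omega⟩
  rw [← h] at hj
  obtain ⟨hA, hB, hu⟩ := hj
  have e : (⟨oo + ((i : ℕ) - oo), hA⟩ : Fin p) = i := Fin.ext (by simp; omega)
  rwa [e] at hu

lemma restrictRange_relabel {p q : ℕ} (hpq : p = q) (U : Set (Fin p × Fin p)) (oo k : ℕ) :
    restrictRange (relabel (finCongr hpq) U) oo k = restrictRange U oo k := by
  subst hpq
  ext ⟨a, b⟩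
  simp only [restrictRange, relabel, Set.mem_setOf_eq, finCongr_refl,
    Equiv.refl_symm, Equiv.refl_apply]

lemma relabel_relabel_symm {p q : ℕ} (e : Fin p ≃ Fin q) (U : Set (Fin q × Fin q)) :
    relabel e (relabel e.symm U) = U := by
  ext ⟨a, b⟩
  simp [relabel]
/-- associativity of the shifted shuffle. -/
theorem shiftedShuffle_assoc (m n o : ℕ)
    (R : Set (Fin m × Fin m)) (S : Set (Fin n × Fin n)) (T : Set (Fin o × Fin o))
    (hR : IsIRel R) (hS : IsIRel S) (hT : IsIRel T) :
    (relabel (finCongr (Nat.add_assoc m n o)) ''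
        (⋃ V ∈ shiftedShuffle R S, shiftedShuffle V T)
      = ⋃ W ∈ shiftedShuffle S T, shiftedShuffle R W) ∧
    ((⋃ V ∈ shiftedShuffle R S, shiftedShuffle V T)
      = {U : Set (Fin (m + n + o) × Fin (m + n + o)) | IsIRel U ∧
          restrictRange U 0 m = R ∧ restrictRange U m n = S ∧
          restrictRange U (m + n) o = T}) ∧
    ((⋃ W ∈ shiftedShuffle S T, shiftedShuffle R W)
      = {U : Set (Fin (m + (n + o)) × Fin (m + (n + o))) | IsIRel U ∧
          restrictRange U 0 m = R ∧ restrictRange U m n = S ∧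
          restrictRange U (m + n) o = T}) := by
  -- reflexivity is implied by the restriction conditions
  have irel2 : ∀ U : Set (Fin (m + n + o) × Fin (m + n + o)),
      restrictRange U 0 m = R → restrictRange U m n = S →
      restrictRange U (m + n) o = T → IsIRel U := by
    intro U h1 h2 h3 i
    rcases lt_or_ge (i : ℕ) m with h | h
    · exact refl_of_restrict h1 hR i (by omega) (by omega)
    rcases lt_or_ge (i : ℕ) (m + n) with h' | h'
    · exact refl_of_restrict h2 hS i h h'
    · exact refl_of_restrict h3 hT i h' (by omega)
  have irel3 : ∀ U : Set (Fin (m + (n + o)) × Fin (m + (n + o))),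
      restrictRange U 0 m = R → restrictRange U m n = S →
      restrictRange U (m + n) o = T → IsIRel U := by
    intro U h1 h2 h3 i
    rcases lt_or_ge (i : ℕ) m with h | h
    · exact refl_of_restrict h1 hR i (by omega) (by omega)
    rcases lt_or_ge (i : ℕ) (m + n) with h' | h'
    · exact refl_of_restrict h2 hS i h h'
    · exact refl_of_restrict h3 hT i h' (by omega)
  have char2 : (⋃ V ∈ shiftedShuffle R S, shiftedShuffle V T)
      = {U : Set (Fin (m + n + o) × Fin (m + n + o)) |
          restrictRange U 0 m = R ∧ restrictRange U m n = S ∧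
          restrictRange U (m + n) o = T} := by
    ext U
    simp only [Set.mem_iUnion, Set.mem_setOf_eq, mem_shuffle_iff, exists_prop]
    constructor
    · rintro ⟨V, ⟨hV1, hV2⟩, hU1, hU2⟩
      refine ⟨?_, ?_, hU2⟩
      · rw [← hV1, ← hU1]
        simpa using (restrictRange_restrictRange U 0 (m + n) 0 m (by omega) (by omega)).symm
      · rw [← hV2, ← hU1]
        simpa using (restrictRange_restrictRange U 0 (m + n) m n (by omega) (by omega)).symm
    · rintro ⟨h1, h2, h3⟩
      refine ⟨restrictRange U 0 (m + n), ⟨?_, ?_⟩, rfl, h3⟩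
      · rw [restrictRange_restrictRange U 0 (m + n) 0 m (by omega) (by omega)]
        simpa using h1
      · rw [restrictRange_restrictRange U 0 (m + n) m n (by omega) (by omega)]
        simpa using h2
  have char3 : (⋃ W ∈ shiftedShuffle S T, shiftedShuffle R W)
      = {U : Set (Fin (m + (n + o)) × Fin (m + (n + o))) |
          restrictRange U 0 m = R ∧ restrictRange U m n = S ∧
          restrictRange U (m + n) o = T} := by
    ext U
    simp only [Set.mem_iUnion, Set.mem_setOf_eq, mem_shuffle_iff, exists_prop]
    constructor
    · rintro ⟨W, ⟨hW1, hW2⟩, hU1, hU2⟩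
      refine ⟨hU1, ?_, ?_⟩
      · rw [← hW1, ← hU2]
        simpa using (restrictRange_restrictRange U m (n + o) 0 n (by omega) (by omega)).symm
      · rw [← hW2, ← hU2]
        simpa using (restrictRange_restrictRange U m (n + o) n o (by omega) (by omega)).symm
    · rintro ⟨h1, h2, h3⟩
      refine ⟨restrictRange U m (n + o), ⟨?_, ?_⟩, h1, rfl⟩
      · rw [restrictRange_restrictRange U m (n + o) 0 n (by omega) (by omega)]
        simpa using h2
      · rw [restrictRange_restrictRange U m (n + o) n o (by omega) (by omega)]
        simpa using h3
  have char2' : (⋃ V ∈ shiftedShuffle R S, shiftedShuffle V T)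
      = {U : Set (Fin (m + n + o) × Fin (m + n + o)) | IsIRel U ∧
          restrictRange U 0 m = R ∧ restrictRange U m n = S ∧
          restrictRange U (m + n) o = T} := by
    rw [char2]
    ext U
    simp only [Set.mem_setOf_eq]
    exact ⟨fun ⟨h1, h2, h3⟩ => ⟨irel2 U h1 h2 h3, h1, h2, h3⟩, fun h => h.2⟩
  have char3' : (⋃ W ∈ shiftedShuffle S T, shiftedShuffle R W)
      = {U : Set (Fin (m + (n + o)) × Fin (m + (n + o))) | IsIRel U ∧
          restrictRange U 0 m = R ∧ restrictRange U m n = S ∧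
          restrictRange U (m + n) o = T} := by
    rw [char3]
    ext U
    simp only [Set.mem_setOf_eq]
    exact ⟨fun ⟨h1, h2, h3⟩ => ⟨irel3 U h1 h2 h3, h1, h2, h3⟩, fun h => h.2⟩
  refine ⟨?_, char2', char3'⟩
  rw [char2, char3]
  ext U'
  simp only [Set.mem_image, Set.mem_setOf_eq]
  constructor
  · rintro ⟨U, ⟨h1, h2, h3⟩, rfl⟩
    rw [restrictRange_relabel, restrictRange_relabel, restrictRange_relabel]
    exact ⟨h1, h2, h3⟩
  · rintro ⟨h1, h2, h3⟩
    refine ⟨relabel (finCongr (Nat.add_assoc m n o)).symm U', ?_,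
      relabel_relabel_symm _ _⟩
    rw [finCongr_symm]
    rw [restrictRange_relabel, restrictRange_relabel, restrictRange_relabel]
    exact ⟨h1, h2, h3⟩

end IntegerRelations
end

section
/- Let R ∈ IRel_m, S ∈ IRel_n and T ∈ IRel_o. Then ⋃_{V ∈ R ∗ S} (V ∗ T) = ⋃_{W ∈ S ∗ T} (R ∗ W), and both sets consist exactly of those U ∈ IRel_{m+n+o} for which there exists a partition [m+n+o] = X ⊔ Y ⊔ Z with |X| = m, |Y| = n, |Z| = o such that U_X = R, U_Y = S, U_Z = T and, for all x ∈ X, y ∈ Y, z ∈ Z: (x,y), (x,z), (y,z) ∈ U while (y,x), (z,x), (z,y) ∉ U. -/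
namespace IntegerRelations

lemma mem_restrict {p k : ℕ} (R : Set (Fin p × Fin p)) (X : Finset (Fin p))
    (h : X.card = k) (x : Fin k × Fin k) :
    x ∈ restrict R X h ↔ (X.orderEmbOfFin h x.1, X.orderEmbOfFin h x.2) ∈ R := by
  simp [restrict, Finset.coe_orderIsoOfFin_apply]

lemma restrict_congr {p k : ℕ} (U : Set (Fin p × Fin p)) {X Y : Finset (Fin p)}
    (h : X = Y) {hX : X.card = k} {hY : Y.card = k} :
    restrict U X hX = restrict U Y hY := by subst h; rfl

lemma exists_emb {p k : ℕ} {X : Finset (Fin p)} (h : X.card = k) {i : Fin p}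
    (hi : i ∈ X) : ∃ j : Fin k, X.orderEmbOfFin h j = i := by
  have : i ∈ Set.range (X.orderEmbOfFin h) := by
    rw [Finset.range_orderEmbOfFin]; exact_mod_cast hi
  exact this

lemma card_image_emb {p k l : ℕ} (A : Finset (Fin p)) (hA : A.card = k)
    (B : Finset (Fin k)) (hB : B.card = l) :
    (B.image (A.orderEmbOfFin hA)).card = l := by
  rw [Finset.card_image_of_injective _ (A.orderEmbOfFin hA).injective, hB]

lemma restrict_restrict {p k l : ℕ} (U : Set (Fin p × Fin p)) (A : Finset (Fin p))
    (hA : A.card = k) (B : Finset (Fin k)) (hB : B.card = l) :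
    restrict (restrict U A hA) B hB
      = restrict U (B.image (A.orderEmbOfFin hA)) (card_image_emb A hA B hB) := by
  have hemb : (fun i => A.orderEmbOfFin hA (B.orderEmbOfFin hB i))
      = ⇑((B.image (A.orderEmbOfFin hA)).orderEmbOfFin (card_image_emb A hA B hB)) := by
    apply Finset.orderEmbOfFin_unique
    · intro x; exact Finset.mem_image_of_mem _ (Finset.orderEmbOfFin_mem _ _ _)
    · exact (A.orderEmbOfFin hA).strictMono.comp (B.orderEmbOfFin hB).strictMono
  ext x
  rw [mem_restrict, mem_restrict, mem_restrict, ← congrFun hemb x.1, ← congrFun hemb x.2]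

lemma image_filter_emb {p k : ℕ} {A : Finset (Fin p)} (hA : A.card = k)
    {X : Finset (Fin p)} (hXA : X ⊆ A) :
    (Finset.univ.filter (fun j => A.orderEmbOfFin hA j ∈ X)).image (A.orderEmbOfFin hA) = X := by
  ext x
  simp only [Finset.mem_image, Finset.mem_filter, Finset.mem_univ, true_and]
  constructor
  · rintro ⟨j, hj, rfl⟩; exact hj
  · intro hx
    obtain ⟨j, rfl⟩ := exists_emb hA (hXA hx)
    exact ⟨j, hx, rfl⟩

lemma isIRel_of_mem_convolution {m n : ℕ} {R : Set (Fin m × Fin m)}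
    {S : Set (Fin n × Fin n)} (hR : IsIRel R) (hS : IsIRel S)
    {U : Set (Fin (m + n) × Fin (m + n))} (hU : U ∈ convolution R S) : IsIRel U := by
  obtain ⟨X, Y, hX, hY, cut, hRX, hSY⟩ := hU
  intro i
  rcases cut.1 i with hi | hi
  · obtain ⟨j, rfl⟩ := exists_emb hX hi
    have h := hR j; rw [← hRX] at h
    exact (mem_restrict U X hX (j, j)).mp h
  · obtain ⟨j, rfl⟩ := exists_emb hY hi
    have h := hS j; rw [← hSY] at h
    exact (mem_restrict U Y hY (j, j)).mp h

def Part (m n o p : ℕ) (R : Set (Fin m × Fin m)) (S : Set (Fin n × Fin n))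
    (T : Set (Fin o × Fin o)) (U : Set (Fin p × Fin p)) : Prop :=
  IsIRel U ∧
  ∃ (X Y Z : Finset (Fin p)) (hX : X.card = m) (hY : Y.card = n) (hZ : Z.card = o),
    (∀ i : Fin p, i ∈ X ∨ i ∈ Y ∨ i ∈ Z) ∧
    Disjoint X Y ∧ Disjoint X Z ∧ Disjoint Y Z ∧
    restrict U X hX = R ∧ restrict U Y hY = S ∧ restrict U Z hZ = T ∧
    (∀ x ∈ X, ∀ y ∈ Y, (x, y) ∈ U ∧ (y, x) ∉ U) ∧
    (∀ x ∈ X, ∀ z ∈ Z, (x, z) ∈ U ∧ (z, x) ∉ U) ∧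
    (∀ y ∈ Y, ∀ z ∈ Z, (y, z) ∈ U ∧ (z, y) ∉ U)

lemma left_eq (m n o : ℕ) (R : Set (Fin m × Fin m)) (S : Set (Fin n × Fin n))
    (T : Set (Fin o × Fin o)) (hR : IsIRel R) (hS : IsIRel S) (hT : IsIRel T) :
    (⋃ V ∈ convolution R S, convolution V T)
      = {U : Set (Fin (m + n + o) × Fin (m + n + o)) | Part m n o (m + n + o) R S T U} := by
  classical
  ext U
  simp only [Set.mem_iUnion, Set.mem_setOf_eq, exists_prop]
  constructor
  · rintro ⟨V, hV, hU⟩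
    obtain ⟨C, D, hC, hD, cutCD, hRC, hSD⟩ := hV
    obtain ⟨A, B, hA, hB, cutAB, hVA, hTB⟩ := hU
    have hVirel : IsIRel V := isIRel_of_mem_convolution hR hS ⟨C, D, hC, hD, cutCD, hRC, hSD⟩
    have hUirel : IsIRel U := isIRel_of_mem_convolution hVirel hT ⟨A, B, hA, hB, cutAB, hVA, hTB⟩
    have hXA : ∀ x ∈ C.image (A.orderEmbOfFin hA), x ∈ A := by
      rintro x hx
      obtain ⟨j, _, rfl⟩ := Finset.mem_image.mp hx
      exact Finset.orderEmbOfFin_mem _ _ _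
    have hYA : ∀ x ∈ D.image (A.orderEmbOfFin hA), x ∈ A := by
      rintro x hx
      obtain ⟨j, _, rfl⟩ := Finset.mem_image.mp hx
      exact Finset.orderEmbOfFin_mem _ _ _
    refine ⟨hUirel, C.image (A.orderEmbOfFin hA), D.image (A.orderEmbOfFin hA), B,
      card_image_emb A hA C hC, card_image_emb A hA D hD, hB, ?_, ?_, ?_, ?_, ?_, ?_, hTB,
      ?_, ?_, ?_⟩
    · intro i
      rcases cutAB.1 i with hiA | hiB
      · obtain ⟨j, rfl⟩ := exists_emb hA hiA
        rcases cutCD.1 j with hj | hj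
        · exact Or.inl (Finset.mem_image_of_mem _ hj)
        · exact Or.inr (Or.inl (Finset.mem_image_of_mem _ hj))
      · exact Or.inr (Or.inr hiB)
    · exact (Finset.disjoint_image (A.orderEmbOfFin hA).injective).mpr cutCD.2.1
    · exact Finset.disjoint_left.mpr fun {x} hx hxB =>
        Finset.disjoint_left.mp cutAB.2.1 (hXA _ hx) hxB
    · exact Finset.disjoint_left.mpr fun {x} hx hxB =>
        Finset.disjoint_left.mp cutAB.2.1 (hYA _ hx) hxB
    · rw [← restrict_restrict U A hA C hC, hVA]; exact hRC
    · rw [← restrict_restrict U A hA D hD, hVA]; exact hSD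
    · intro x hx y hy
      obtain ⟨c, hc, rfl⟩ := Finset.mem_image.mp hx
      obtain ⟨d, hd, rfl⟩ := Finset.mem_image.mp hy
      have h1 := cutCD.2.2 c hc d hd
      rw [← hVA] at h1
      exact ⟨(mem_restrict U A hA (c, d)).mp h1.1,
        fun hc' => h1.2 ((mem_restrict U A hA (d, c)).mpr hc')⟩
    · intro x hx z hz
      exact cutAB.2.2 _ (hXA _ hx) z hz
    · intro y hy z hz
      exact cutAB.2.2 _ (hYA _ hy) z hz
  · rintro ⟨hUirel, X, Y, Z, hX, hY, hZ, cover, dXY, dXZ, dYZ, hRX, hSY, hTZ, pXY, pXZ, pYZ⟩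
    have hA : (X ∪ Y).card = m + n := by
      rw [Finset.card_union_of_disjoint dXY, hX, hY]
    set A := X ∪ Y with hAdef
    set C := Finset.univ.filter (fun j => A.orderEmbOfFin hA j ∈ X) with hCdef
    set D := Finset.univ.filter (fun j => A.orderEmbOfFin hA j ∈ Y) with hDdef
    have hCimg : C.image (A.orderEmbOfFin hA) = X :=
      image_filter_emb hA Finset.subset_union_left
    have hDimg : D.image (A.orderEmbOfFin hA) = Y :=
      image_filter_emb hA Finset.subset_union_right
    have hC : C.card = m := by
      have h2 := Finset.card_image_of_injective C (A.orderEmbOfFin hA).injective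
      rw [hCimg] at h2; omega
    have hD : D.card = n := by
      have h2 := Finset.card_image_of_injective D (A.orderEmbOfFin hA).injective
      rw [hDimg] at h2; omega
    refine ⟨restrict U A hA, ⟨C, D, hC, hD, ⟨?_, ?_, ?_⟩, ?_, ?_⟩,
      ⟨A, Z, hA, hZ, ⟨?_, ?_, ?_⟩, rfl, hTZ⟩⟩
    · intro j
      have hj : A.orderEmbOfFin hA j ∈ A := Finset.orderEmbOfFin_mem _ _ _
      rcases Finset.mem_union.mp hj with h | h
      · exact Or.inl (Finset.mem_filter.mpr ⟨Finset.mem_univ _, h⟩)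
      · exact Or.inr (Finset.mem_filter.mpr ⟨Finset.mem_univ _, h⟩)
    · refine Finset.disjoint_left.mpr fun {j} hj hj' => ?_
      exact Finset.disjoint_left.mp dXY (Finset.mem_filter.mp hj).2 (Finset.mem_filter.mp hj').2
    · intro c hc d hd
      have h := pXY _ (Finset.mem_filter.mp hc).2 _ (Finset.mem_filter.mp hd).2
      exact ⟨(mem_restrict U A hA (c, d)).mpr h.1,
        fun hc' => h.2 ((mem_restrict U A hA (d, c)).mp hc')⟩
    · rw [restrict_restrict U A hA C hC]
      exact (restrict_congr U hCimg).trans hRX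
    · rw [restrict_restrict U A hA D hD]
      exact (restrict_congr U hDimg).trans hSY
    · intro i
      rcases cover i with h | h | h
      · exact Or.inl (Finset.mem_union_left _ h)
      · exact Or.inl (Finset.mem_union_right _ h)
      · exact Or.inr h
    · exact Finset.disjoint_union_left.mpr ⟨dXZ, dYZ⟩
    · intro a ha z hz
      rcases Finset.mem_union.mp ha with h | h
      · exact pXZ a h z hz
      · exact pYZ a h z hz

lemma right_eq (m n o : ℕ) (R : Set (Fin m × Fin m)) (S : Set (Fin n × Fin n))
    (T : Set (Fin o × Fin o)) (hR : IsIRel R) (hS : IsIRel S) (hT : IsIRel T) :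
    (⋃ W ∈ convolution S T, convolution R W)
      = {U : Set (Fin (m + (n + o)) × Fin (m + (n + o))) |
          Part m n o (m + (n + o)) R S T U} := by
  classical
  ext U
  simp only [Set.mem_iUnion, Set.mem_setOf_eq, exists_prop]
  constructor
  · rintro ⟨W, hW, hU⟩
    obtain ⟨C, D, hC, hD, cutCD, hSC, hTD⟩ := hW
    obtain ⟨A, B, hA, hB, cutAB, hRA, hWB⟩ := hU
    have hWirel : IsIRel W := isIRel_of_mem_convolution hS hT ⟨C, D, hC, hD, cutCD, hSC, hTD⟩
    have hUirel : IsIRel U := isIRel_of_mem_convolution hR hWirel ⟨A, B, hA, hB, cutAB, hRA, hWB⟩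
    have hYB : ∀ x ∈ C.image (B.orderEmbOfFin hB), x ∈ B := by
      rintro x hx
      obtain ⟨j, _, rfl⟩ := Finset.mem_image.mp hx
      exact Finset.orderEmbOfFin_mem _ _ _
    have hZB : ∀ x ∈ D.image (B.orderEmbOfFin hB), x ∈ B := by
      rintro x hx
      obtain ⟨j, _, rfl⟩ := Finset.mem_image.mp hx
      exact Finset.orderEmbOfFin_mem _ _ _
    refine ⟨hUirel, A, C.image (B.orderEmbOfFin hB), D.image (B.orderEmbOfFin hB),
      hA, card_image_emb B hB C hC, card_image_emb B hB D hD, ?_, ?_, ?_, ?_, hRA, ?_, ?_,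
      ?_, ?_, ?_⟩
    · intro i
      rcases cutAB.1 i with hiA | hiB
      · exact Or.inl hiA
      · obtain ⟨j, rfl⟩ := exists_emb hB hiB
        rcases cutCD.1 j with hj | hj
        · exact Or.inr (Or.inl (Finset.mem_image_of_mem _ hj))
        · exact Or.inr (Or.inr (Finset.mem_image_of_mem _ hj))
    · exact Finset.disjoint_left.mpr fun {x} hx hx' =>
        Finset.disjoint_left.mp cutAB.2.1 hx (hYB _ hx')
    · exact Finset.disjoint_left.mpr fun {x} hx hx' =>
        Finset.disjoint_left.mp cutAB.2.1 hx (hZB _ hx')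
    · exact (Finset.disjoint_image (B.orderEmbOfFin hB).injective).mpr cutCD.2.1
    · rw [← restrict_restrict U B hB C hC, hWB]; exact hSC
    · rw [← restrict_restrict U B hB D hD, hWB]; exact hTD
    · intro x hx y hy
      exact cutAB.2.2 x hx _ (hYB _ hy)
    · intro x hx z hz
      exact cutAB.2.2 x hx _ (hZB _ hz)
    · intro y hy z hz
      obtain ⟨c, hc, rfl⟩ := Finset.mem_image.mp hy
      obtain ⟨d, hd, rfl⟩ := Finset.mem_image.mp hz
      have h1 := cutCD.2.2 c hc d hd
      rw [← hWB] at h1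
      exact ⟨(mem_restrict U B hB (c, d)).mp h1.1,
        fun hc' => h1.2 ((mem_restrict U B hB (d, c)).mpr hc')⟩
  · rintro ⟨hUirel, X, Y, Z, hX, hY, hZ, cover, dXY, dXZ, dYZ, hRX, hSY, hTZ, pXY, pXZ, pYZ⟩
    have hB : (Y ∪ Z).card = n + o := by
      rw [Finset.card_union_of_disjoint dYZ, hY, hZ]
    set B := Y ∪ Z with hBdef
    set C := Finset.univ.filter (fun j => B.orderEmbOfFin hB j ∈ Y) with hCdef
    set D := Finset.univ.filter (fun j => B.orderEmbOfFin hB j ∈ Z) with hDdef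
    have hCimg : C.image (B.orderEmbOfFin hB) = Y :=
      image_filter_emb hB Finset.subset_union_left
    have hDimg : D.image (B.orderEmbOfFin hB) = Z :=
      image_filter_emb hB Finset.subset_union_right
    have hC : C.card = n := by
      have h2 := Finset.card_image_of_injective C (B.orderEmbOfFin hB).injective
      rw [hCimg] at h2; omega
    have hD : D.card = o := by
      have h2 := Finset.card_image_of_injective D (B.orderEmbOfFin hB).injective
      rw [hDimg] at h2; omega
    refine ⟨restrict U B hB, ⟨C, D, hC, hD, ⟨?_, ?_, ?_⟩, ?_, ?_⟩,
      ⟨X, B, hX, hB, ⟨?_, ?_, ?_⟩, hRX, rfl⟩⟩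
    · intro j
      have hj : B.orderEmbOfFin hB j ∈ B := Finset.orderEmbOfFin_mem _ _ _
      rcases Finset.mem_union.mp hj with h | h
      · exact Or.inl (Finset.mem_filter.mpr ⟨Finset.mem_univ _, h⟩)
      · exact Or.inr (Finset.mem_filter.mpr ⟨Finset.mem_univ _, h⟩)
    · refine Finset.disjoint_left.mpr fun {j} hj hj' => ?_
      exact Finset.disjoint_left.mp dYZ (Finset.mem_filter.mp hj).2 (Finset.mem_filter.mp hj').2
    · intro c hc d hd
      have h := pYZ _ (Finset.mem_filter.mp hc).2 _ (Finset.mem_filter.mp hd).2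
      exact ⟨(mem_restrict U B hB (c, d)).mpr h.1,
        fun hc' => h.2 ((mem_restrict U B hB (d, c)).mp hc')⟩
    · rw [restrict_restrict U B hB C hC]
      exact (restrict_congr U hCimg).trans hSY
    · rw [restrict_restrict U B hB D hD]
      exact (restrict_congr U hDimg).trans hTZ
    · intro i
      rcases cover i with h | h | h
      · exact Or.inl h
      · exact Or.inr (Finset.mem_union_left _ h)
      · exact Or.inr (Finset.mem_union_right _ h)
    · exact Finset.disjoint_union_right.mpr ⟨dXY, dXZ⟩
    · intro a ha b hb
      rcases Finset.mem_union.mp hb with h | h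
      · exact pXY a ha b h
      · exact pXZ a ha b h

lemma part_relabel {m n o p q : ℕ} {R : Set (Fin m × Fin m)} {S : Set (Fin n × Fin n)}
    {T : Set (Fin o × Fin o)} (e : Fin p ≃ Fin q)
    (he : ∀ i : Fin p, ((e i : Fin q) : ℕ) = (i : ℕ))
    {U : Set (Fin p × Fin p)} (h : Part m n o p R S T U) :
    Part m n o q R S T (relabel e U) := by
  obtain ⟨hIrel, X, Y, Z, hX, hY, hZ, cover, dXY, dXZ, dYZ, hRX, hSY, hTZ, pXY, pXZ, pYZ⟩ := h
  have hmono : StrictMono e := fun a b hab => by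
    rw [Fin.lt_def, he a, he b]
    exact hab
  have hrestrict : ∀ {k : ℕ} (W : Finset (Fin p)) (hW : W.card = k)
      (hW' : (W.map e.toEmbedding).card = k),
      restrict (relabel e U) (W.map e.toEmbedding) hW' = restrict U W hW := by
    intro k W hW hW'
    have hemb : (fun i => e (W.orderEmbOfFin hW i))
        = ⇑((W.map e.toEmbedding).orderEmbOfFin hW') := by
      apply Finset.orderEmbOfFin_unique
      · intro x
        simpa using Finset.mem_map_of_mem e.toEmbedding (Finset.orderEmbOfFin_mem W hW x)
      · exact hmono.comp (W.orderEmbOfFin hW).strictMono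
    ext x
    rw [mem_restrict, mem_restrict, ← congrFun hemb x.1, ← congrFun hemb x.2]
    simp [relabel]
  have hmm : ∀ (W : Finset (Fin p)) (i : Fin q), i ∈ W.map e.toEmbedding ↔ e.symm i ∈ W := by
    intro W i
    simp only [Finset.mem_map, Equiv.coe_toEmbedding]
    constructor
    · rintro ⟨a, ha, rfl⟩; rw [Equiv.symm_apply_apply]; exact ha
    · intro hi; exact ⟨e.symm i, hi, by simp⟩
  refine ⟨fun i => hIrel (e.symm i), X.map e.toEmbedding, Y.map e.toEmbedding,
    Z.map e.toEmbedding, by rw [Finset.card_map]; exact hX,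
    by rw [Finset.card_map]; exact hY, by rw [Finset.card_map]; exact hZ, ?_, ?_, ?_, ?_,
    (hrestrict X hX _).trans hRX, (hrestrict Y hY _).trans hSY, (hrestrict Z hZ _).trans hTZ,
    ?_, ?_, ?_⟩
  · intro i
    rcases cover (e.symm i) with h | h | h
    · exact Or.inl ((hmm X i).mpr h)
    · exact Or.inr (Or.inl ((hmm Y i).mpr h))
    · exact Or.inr (Or.inr ((hmm Z i).mpr h))
  · exact (Finset.disjoint_map _).mpr dXY
  · exact (Finset.disjoint_map _).mpr dXZ
  · exact (Finset.disjoint_map _).mpr dYZ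
  · intro x hx y hy
    exact pXY _ ((hmm X x).mp hx) _ ((hmm Y y).mp hy)
  · intro x hx z hz
    exact pXZ _ ((hmm X x).mp hx) _ ((hmm Z z).mp hz)
  · intro y hy z hz
    exact pYZ _ ((hmm Y y).mp hy) _ ((hmm Z z).mp hz)

/-- associativity of the convolution. -/
theorem convolution_assoc (m n o : ℕ)
    (R : Set (Fin m × Fin m)) (S : Set (Fin n × Fin n)) (T : Set (Fin o × Fin o))
    (hR : IsIRel R) (hS : IsIRel S) (hT : IsIRel T) :
    (relabel (finCongr (Nat.add_assoc m n o)) ''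
        (⋃ V ∈ convolution R S, convolution V T)
      = ⋃ W ∈ convolution S T, convolution R W) ∧
    ((⋃ V ∈ convolution R S, convolution V T)
      = {U : Set (Fin (m + n + o) × Fin (m + n + o)) | IsIRel U ∧
          ∃ (X Y Z : Finset (Fin (m + n + o)))
            (hX : X.card = m) (hY : Y.card = n) (hZ : Z.card = o),
            (∀ i : Fin (m + n + o), i ∈ X ∨ i ∈ Y ∨ i ∈ Z) ∧
            Disjoint X Y ∧ Disjoint X Z ∧ Disjoint Y Z ∧
            restrict U X hX = R ∧ restrict U Y hY = S ∧ restrict U Z hZ = T ∧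
            (∀ x ∈ X, ∀ y ∈ Y, (x, y) ∈ U ∧ (y, x) ∉ U) ∧
            (∀ x ∈ X, ∀ z ∈ Z, (x, z) ∈ U ∧ (z, x) ∉ U) ∧
            (∀ y ∈ Y, ∀ z ∈ Z, (y, z) ∈ U ∧ (z, y) ∉ U)}) ∧
    ((⋃ W ∈ convolution S T, convolution R W)
      = {U : Set (Fin (m + (n + o)) × Fin (m + (n + o))) | IsIRel U ∧
          ∃ (X Y Z : Finset (Fin (m + (n + o))))
            (hX : X.card = m) (hY : Y.card = n) (hZ : Z.card = o),
            (∀ i : Fin (m + (n + o)), i ∈ X ∨ i ∈ Y ∨ i ∈ Z) ∧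
            Disjoint X Y ∧ Disjoint X Z ∧ Disjoint Y Z ∧
            restrict U X hX = R ∧ restrict U Y hY = S ∧ restrict U Z hZ = T ∧
            (∀ x ∈ X, ∀ y ∈ Y, (x, y) ∈ U ∧ (y, x) ∉ U) ∧
            (∀ x ∈ X, ∀ z ∈ Z, (x, z) ∈ U ∧ (z, x) ∉ U) ∧
            (∀ y ∈ Y, ∀ z ∈ Z, (y, z) ∈ U ∧ (z, y) ∉ U)}) := by
  have h2 := left_eq m n o R S T hR hS hT
  have h3 := right_eq m n o R S T hR hS hT
  refine ⟨?_, h2, h3⟩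
  rw [h2, h3]
  ext U
  constructor
  · rintro ⟨U', hU', rfl⟩
    exact part_relabel _ (fun i => by simp) hU'
  · intro hU
    exact ⟨relabel (finCongr (Nat.add_assoc m n o)).symm U,
      part_relabel _ (fun i => by simp) hU, relabel_relabel_symm _ U⟩


end IntegerRelations
end

section
/- Let R ∈ IRel_m, S ∈ IRel_n and T ∈ R ⧢ S. A partition [m+n] = A ⊔ B is a total cut of T if and only if there exist a total cut (X,Y) of R and a total cut (U,V) of S such that A = X ∪ (m+U) and B = Y ∪ (m+V) (where m+U = {m+u : u ∈ U}), X × (m+V) ⊆ T, (m+U) × Y ⊆ T, ((m+V) × X) ∩ T = ∅ and (Y × (m+U)) ∩ T = ∅. -/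
namespace IntegerRelations

/-- total cuts of an element of a shifted shuffle. -/
theorem totalCut_of_shiftedShuffle (m n : ℕ)
    (R : Set (Fin m × Fin m)) (S : Set (Fin n × Fin n))
    (hR : IsIRel R) (hS : IsIRel S)
    (T : Set (Fin (m + n) × Fin (m + n))) (hT : T ∈ shiftedShuffle R S)
    (A B : Finset (Fin (m + n))) :
    IsTotalCut T A B ↔
      ∃ (X Y : Finset (Fin m)) (U V : Finset (Fin n)),
        IsTotalCut R X Y ∧ IsTotalCut S U V ∧
        A = X.image (Fin.castAdd n) ∪ U.image (Fin.natAdd m) ∧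
        B = Y.image (Fin.castAdd n) ∪ V.image (Fin.natAdd m) ∧
        (∀ x ∈ X, ∀ v ∈ V, (Fin.castAdd n x, Fin.natAdd m v) ∈ T) ∧
        (∀ u ∈ U, ∀ y ∈ Y, (Fin.natAdd m u, Fin.castAdd n y) ∈ T) ∧
        (∀ v ∈ V, ∀ x ∈ X, (Fin.natAdd m v, Fin.castAdd n x) ∉ T) ∧
        (∀ y ∈ Y, ∀ u ∈ U, (Fin.castAdd n y, Fin.natAdd m u) ∉ T) := by
  classical
  obtain ⟨I, D, hI, hD, hTeq⟩ := hT
  have hcinj : Function.Injective (Fin.castAdd n : Fin m → Fin (m + n)) := by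
    intro a b h
    have := congrArg Fin.val h
    simp only [Fin.coe_castAdd] at this
    exact Fin.ext this
  have hninj : Function.Injective (Fin.natAdd m : Fin n → Fin (m + n)) := by
    intro a b h
    have := congrArg Fin.val h
    simp only [Fin.coe_natAdd] at this
    exact Fin.ext (by omega)
  have hcn : ∀ (a : Fin m) (b : Fin n), Fin.castAdd n a ≠ Fin.natAdd m b := by
    intro a b h
    have := congrArg Fin.val h
    have ha := a.isLt
    simp only [Fin.coe_castAdd, Fin.coe_natAdd] at this
    omega
  have hdecomp : ∀ i : Fin (m + n),
      (∃ x : Fin m, i = Fin.castAdd n x) ∨ (∃ u : Fin n, i = Fin.natAdd m u) := by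
    intro i
    have hi := i.isLt
    by_cases h : (i : ℕ) < m
    · exact Or.inl ⟨⟨i, h⟩, Fin.ext rfl⟩
    · exact Or.inr ⟨⟨(i : ℕ) - m, by omega⟩, Fin.ext (by simp [Fin.coe_natAdd]; omega)⟩
  have hLL : ∀ a b : Fin m, ((Fin.castAdd n a, Fin.castAdd n b) ∈ T ↔ (a, b) ∈ R) := by
    intro a b
    rw [hTeq]
    constructor
    · rintro (((⟨y, hy, heq⟩ | ⟨y, hy, heq⟩) | h) | h)
      · rw [Prod.ext_iff] at heq
        rw [hcinj heq.1, hcinj heq.2]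
        exact hy
      · have h1 := congrArg (fun p => ((p.1 : Fin (m + n)) : ℕ)) heq
        have ha := a.isLt
        simp only [Fin.coe_castAdd, Fin.coe_natAdd] at h1
        omega
      · have := hI h
        have hb := b.isLt
        simp only [lowHigh, Set.mem_setOf_eq, Fin.coe_castAdd] at this
        omega
      · have := hD h
        have ha := a.isLt
        simp only [highLow, Set.mem_setOf_eq, Fin.coe_castAdd] at this
        omega
    · intro h
      exact Or.inl (Or.inl (Or.inl ⟨(a, b), h, rfl⟩))
  have hHH : ∀ a b : Fin n, ((Fin.natAdd m a, Fin.natAdd m b) ∈ T ↔ (a, b) ∈ S) := by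
    intro a b
    rw [hTeq]
    constructor
    · rintro (((⟨y, hy, heq⟩ | ⟨y, hy, heq⟩) | h) | h)
      · have h1 := congrArg (fun p => ((p.1 : Fin (m + n)) : ℕ)) heq
        have hy1 := y.1.isLt
        simp only [Fin.coe_castAdd, Fin.coe_natAdd] at h1
        omega
      · rw [Prod.ext_iff] at heq
        rw [hninj heq.1, hninj heq.2]
        exact hy
      · have := hI h
        simp only [lowHigh, Set.mem_setOf_eq, Fin.coe_natAdd] at this
        omega
      · have := hD h
        simp only [highLow, Set.mem_setOf_eq, Fin.coe_natAdd] at this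
        omega
    · intro h
      exact Or.inl (Or.inl (Or.inr ⟨(a, b), h, rfl⟩))
  constructor
  · rintro ⟨hcov, hdis, hAB⟩
    refine ⟨Finset.univ.filter (fun x => Fin.castAdd n x ∈ A),
            Finset.univ.filter (fun x => Fin.castAdd n x ∈ B),
            Finset.univ.filter (fun u => Fin.natAdd m u ∈ A),
            Finset.univ.filter (fun u => Fin.natAdd m u ∈ B),
            ⟨?_, ?_, ?_⟩, ⟨?_, ?_, ?_⟩, ?_, ?_, ?_, ?_, ?_, ?_⟩
    · intro x
      simpa using hcov (Fin.castAdd n x)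
    · rw [Finset.disjoint_left] at hdis ⊢
      intro x hx hx'
      simp only [Finset.mem_filter, Finset.mem_univ, true_and] at hx hx'
      exact hdis hx hx'
    · intro x hx y hy
      simp only [Finset.mem_filter, Finset.mem_univ, true_and] at hx hy
      have h := hAB _ hx _ hy
      exact ⟨(hLL x y).1 h.1, fun hc => h.2 ((hLL y x).2 hc)⟩
    · intro u
      simpa using hcov (Fin.natAdd m u)
    · rw [Finset.disjoint_left] at hdis ⊢
      intro u hu hu'
      simp only [Finset.mem_filter, Finset.mem_univ, true_and] at hu hu'
      exact hdis hu hu'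
    · intro u hu v hv
      simp only [Finset.mem_filter, Finset.mem_univ, true_and] at hu hv
      have h := hAB _ hu _ hv
      exact ⟨(hHH u v).1 h.1, fun hc => h.2 ((hHH v u).2 hc)⟩
    · ext i
      simp only [Finset.mem_union, Finset.mem_image, Finset.mem_filter, Finset.mem_univ, true_and]
      constructor
      · intro hi
        rcases hdecomp i with ⟨x, rfl⟩ | ⟨u, rfl⟩
        · exact Or.inl ⟨x, hi, rfl⟩
        · exact Or.inr ⟨u, hi, rfl⟩
      · rintro (⟨y, hy, heq⟩ | ⟨v, hv, heq⟩) <;> rw [← heq] <;> assumption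
    · ext i
      simp only [Finset.mem_union, Finset.mem_image, Finset.mem_filter, Finset.mem_univ, true_and]
      constructor
      · intro hi
        rcases hdecomp i with ⟨x, rfl⟩ | ⟨u, rfl⟩
        · exact Or.inl ⟨x, hi, rfl⟩
        · exact Or.inr ⟨u, hi, rfl⟩
      · rintro (⟨y, hy, heq⟩ | ⟨v, hv, heq⟩) <;> rw [← heq] <;> assumption
    · intro x hx v hv
      simp only [Finset.mem_filter, Finset.mem_univ, true_and] at hx hv
      exact (hAB _ hx _ hv).1
    · intro u hu y hy
      simp only [Finset.mem_filter, Finset.mem_univ, true_and] at hu hy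
      exact (hAB _ hu _ hy).1
    · intro v hv x hx
      simp only [Finset.mem_filter, Finset.mem_univ, true_and] at hx hv
      exact (hAB _ hx _ hv).2
    · intro y hy u hu
      simp only [Finset.mem_filter, Finset.mem_univ, true_and] at hu hy
      exact (hAB _ hu _ hy).2
  · rintro ⟨X, Y, U, V, ⟨hXYcov, hXYdis, hXY⟩, ⟨hUVcov, hUVdis, hUV⟩, rfl, rfl,
      hXV, hUY, hVX, hYU⟩
    refine ⟨?_, ?_, ?_⟩
    · intro i
      rcases hdecomp i with ⟨x, rfl⟩ | ⟨u, rfl⟩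
      · rcases hXYcov x with h | h
        · exact Or.inl (Finset.mem_union_left _ (Finset.mem_image_of_mem _ h))
        · exact Or.inr (Finset.mem_union_left _ (Finset.mem_image_of_mem _ h))
      · rcases hUVcov u with h | h
        · exact Or.inl (Finset.mem_union_right _ (Finset.mem_image_of_mem _ h))
        · exact Or.inr (Finset.mem_union_right _ (Finset.mem_image_of_mem _ h))
    · rw [Finset.disjoint_left]
      intro i hi hi'
      simp only [Finset.mem_union, Finset.mem_image] at hi hi'
      rcases hi with ⟨x, hx, rfl⟩ | ⟨u, hu, rfl⟩ <;>
        rcases hi' with ⟨y, hy, heq⟩ | ⟨v, hv, heq⟩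
      · exact Finset.disjoint_left.mp hXYdis hx (hcinj heq ▸ hy)
      · exact hcn _ _ heq.symm
      · exact hcn _ _ heq
      · exact Finset.disjoint_left.mp hUVdis hu (hninj heq ▸ hv)
    · intro a ha b hb
      simp only [Finset.mem_union, Finset.mem_image] at ha hb
      rcases ha with ⟨x, hx, rfl⟩ | ⟨u, hu, rfl⟩ <;>
        rcases hb with ⟨y, hy, rfl⟩ | ⟨v, hv, rfl⟩
      · exact ⟨(hLL x y).2 (hXY x hx y hy).1, fun hc => (hXY x hx y hy).2 ((hLL y x).1 hc)⟩
      · exact ⟨hXV x hx v hv, hVX v hv x hx⟩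
      · exact ⟨hUY u hu y hy, hYU y hy u hu⟩
      · exact ⟨(hHH u v).2 (hUV u hu v hv).1, fun hc => (hUV u hu v hv).2 ((hHH v u).1 hc)⟩

end IntegerRelations
end

section
/- Let R ∈ IRel_m and S ∈ IRel_n with m, n ≥ 1, and set p = m + n. Then: (a) underprod(R,S) admits a primitive cut at m; (b) for every 0 < k < m, underprod(R,S) admits a primitive cut at k if and only if R admits a primitive cut at k; (c) for every m < k < p, underprod(R,S) admits a primitive cut at k if and only if S admits a primitive cut at k − m; (d) for every 0 ≤ k ≤ m, (underprod(R,S))_{{1,…,k}} = R_{{1,…,k}} and (underprod(R,S))_{{k+1,…,p}} = underprod(R_{{k+1,…,m}}, S). -/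
namespace IntegerRelations

lemma mem_underprod_iff {m n : ℕ} (R : Set (Fin m × Fin m)) (S : Set (Fin n × Fin n))
    (i j : Fin (m + n)) :
    (i, j) ∈ underprod R S ↔
      (∃ a b : Fin m, (a, b) ∈ R ∧ (i : ℕ) = (a : ℕ) ∧ (j : ℕ) = (b : ℕ)) ∨
      (∃ a b : Fin n, (a, b) ∈ S ∧ (i : ℕ) = m + (a : ℕ) ∧ (j : ℕ) = m + (b : ℕ)) ∨
      ((i : ℕ) < m ∧ m ≤ (j : ℕ)) := by
  unfold underprod shiftL shiftR lowHigh
  simp only [Set.mem_union, Set.mem_setOf_eq, Prod.ext_iff, Prod.exists]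
  constructor
  · rintro ((⟨a, b, hab, h1, h2⟩ | ⟨a, b, hab, h1, h2⟩) | h)
    · exact Or.inl ⟨a, b, hab, by rw [h1]; simp, by rw [h2]; simp⟩
    · exact Or.inr (Or.inl ⟨a, b, hab, by rw [h1]; simp, by rw [h2]; simp⟩)
    · exact Or.inr (Or.inr h)
  · rintro (⟨a, b, hab, h1, h2⟩ | ⟨a, b, hab, h1, h2⟩ | h)
    · exact Or.inl (Or.inl ⟨a, b, hab, by ext <;> simpa, by ext <;> simpa⟩)
    · exact Or.inl (Or.inr ⟨a, b, hab, by ext <;> simpa, by ext <;> simpa⟩)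
    · exact Or.inr h

lemma mem_congr {p : ℕ} (R : Set (Fin p × Fin p)) {a b a' b' : Fin p}
    (h : (a, b) ∈ R) (h1 : (a' : ℕ) = (a : ℕ)) (h2 : (b' : ℕ) = (b : ℕ)) :
    (a', b') ∈ R := by
  obtain rfl : a' = a := Fin.ext h1
  obtain rfl : b' = b := Fin.ext h2
  exact h

/-- primitive cuts of `underprod R S`. -/
theorem primitiveCuts_of_underprod (m n : ℕ) (hm : 1 ≤ m) (hn : 1 ≤ n)
    (R : Set (Fin m × Fin m)) (S : Set (Fin n × Fin n))
    (hR : IsIRel R) (hS : IsIRel S) :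
    HasPrimitiveCutAt (underprod R S) m ∧
    (∀ k : ℕ, 0 < k → k < m →
      (HasPrimitiveCutAt (underprod R S) k ↔ HasPrimitiveCutAt R k)) ∧
    (∀ k : ℕ, m < k → k < m + n →
      (HasPrimitiveCutAt (underprod R S) k ↔ HasPrimitiveCutAt S (k - m))) ∧
    (∀ k : ℕ, k ≤ m →
      restrictRange (underprod R S) 0 k = restrictRange R 0 k ∧
      restrictRange (underprod R S) k (m - k + n)
        = underprod (restrictRange R k (m - k)) S) := by
  refine ⟨?_, ?_, ?_, ?_⟩
  · -- (a)
    intro i j hi hj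
    constructor
    · rw [mem_underprod_iff]; exact Or.inr (Or.inr ⟨hi, hj⟩)
    · intro h
      rw [mem_underprod_iff] at h
      rcases h with ⟨a, b, _, h1, h2⟩ | ⟨a, b, _, h1, h2⟩ | h
      · have := a.isLt; omega
      · have := a.isLt; omega
      · omega
  · -- (b)
    intro k hk hkm
    constructor
    · intro H i j hi hj
      have hi' : (i : ℕ) < m + n := by have := i.isLt; omega
      have hj' : (j : ℕ) < m + n := by have := j.isLt; omega
      obtain ⟨h1, h2⟩ := H ⟨i, hi'⟩ ⟨j, hj'⟩ hi hj
      rw [mem_underprod_iff] at h1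
      constructor
      · rcases h1 with ⟨a, b, hab, e1, e2⟩ | ⟨a, b, _, e1, e2⟩ | h
        · exact mem_congr R hab e1 e2
        · have := i.isLt; simp at e1; omega
        · have := j.isLt; simp at h; omega
      · intro hji
        apply h2
        rw [mem_underprod_iff]
        exact Or.inl ⟨j, i, hji, rfl, rfl⟩
    · intro H i j hi hj
      have him : (i : ℕ) < m := by omega
      rcases Nat.lt_or_ge (j : ℕ) m with hjm | hjm
      · obtain ⟨h1, h2⟩ := H ⟨i, him⟩ ⟨j, hjm⟩ hi hj
        constructor
        · rw [mem_underprod_iff]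
          exact Or.inl ⟨⟨i, him⟩, ⟨j, hjm⟩, h1, rfl, rfl⟩
        · intro h
          rw [mem_underprod_iff] at h
          rcases h with ⟨a, b, hab, e1, e2⟩ | ⟨a, b, _, e1, e2⟩ | h
          · exact h2 (mem_congr R hab e1 e2)
          · have := a.isLt; omega
          · omega
      · constructor
        · rw [mem_underprod_iff]; exact Or.inr (Or.inr ⟨him, hjm⟩)
        · intro h
          rw [mem_underprod_iff] at h
          rcases h with ⟨a, b, _, e1, e2⟩ | ⟨a, b, _, e1, e2⟩ | h
          · have := a.isLt; omega
          · have := b.isLt; omega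
          · omega
  · -- (c)
    intro k hmk hkp
    constructor
    · intro H i j hi hj
      have hi' : m + (i : ℕ) < m + n := by have := i.isLt; omega
      have hj' : m + (j : ℕ) < m + n := by have := j.isLt; omega
      obtain ⟨h1, h2⟩ := H ⟨m + i, hi'⟩ ⟨m + j, hj'⟩ (by simp; omega) (by simp; omega)
      rw [mem_underprod_iff] at h1
      constructor
      · rcases h1 with ⟨a, b, _, e1, e2⟩ | ⟨a, b, hab, e1, e2⟩ | h
        · have := a.isLt; simp at e1; omega
        · exact mem_congr S hab (by simp at e1 ⊢; omega) (by simp at e2 ⊢; omega)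
        · have hh : m + (i : ℕ) < m := h.1
          omega
      · intro hji
        apply h2
        rw [mem_underprod_iff]
        exact Or.inr (Or.inl ⟨j, i, hji, rfl, rfl⟩)
    · intro H i j hi hj
      have hjm : m ≤ (j : ℕ) := by omega
      rcases Nat.lt_or_ge (i : ℕ) m with him | him
      · constructor
        · rw [mem_underprod_iff]; exact Or.inr (Or.inr ⟨him, hjm⟩)
        · intro h
          rw [mem_underprod_iff] at h
          rcases h with ⟨a, b, _, e1, e2⟩ | ⟨a, b, _, e1, e2⟩ | h
          · have := a.isLt; omega
          · have := b.isLt; omega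
          · omega
      · have hin : (i : ℕ) - m < n := by have := i.isLt; omega
        have hjn : (j : ℕ) - m < n := by have := j.isLt; omega
        obtain ⟨h1, h2⟩ := H ⟨(i : ℕ) - m, hin⟩ ⟨(j : ℕ) - m, hjn⟩ (by simp; omega) (by simp; omega)
        constructor
        · rw [mem_underprod_iff]
          exact Or.inr (Or.inl ⟨_, _, h1, by simp; omega, by simp; omega⟩)
        · intro h
          rw [mem_underprod_iff] at h
          rcases h with ⟨a, b, _, e1, e2⟩ | ⟨a, b, hab, e1, e2⟩ | h
          · have := a.isLt; omega
          · exact h2 (mem_congr S hab (by simp at e1 ⊢; omega) (by simp at e2 ⊢; omega))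
          · omega
  · -- (d)
    intro k hk
    constructor
    · ext ⟨x1, x2⟩
      simp only [restrictRange, Set.mem_setOf_eq]
      have hx1 := x1.isLt
      have hx2 := x2.isLt
      constructor
      · rintro ⟨h1, h2, hmem⟩
        rw [mem_underprod_iff] at hmem
        refine ⟨by omega, by omega, ?_⟩
        rcases hmem with ⟨a, b, hab, e1, e2⟩ | ⟨a, b, _, e1, e2⟩ | h
        · exact mem_congr R hab (by simp at e1 ⊢; omega) (by simp at e2 ⊢; omega)
        · simp at e1; omega
        · simp at h; omega
      · rintro ⟨h1, h2, hmem⟩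
        refine ⟨by omega, by omega, ?_⟩
        rw [mem_underprod_iff]
        exact Or.inl ⟨⟨0 + x1, h1⟩, ⟨0 + x2, h2⟩, hmem, by simp, by simp⟩
    · ext ⟨x1, x2⟩
      simp only [restrictRange, Set.mem_setOf_eq]
      have hx1 := x1.isLt
      have hx2 := x2.isLt
      rw [mem_underprod_iff]
      constructor
      · rintro ⟨h1, h2, hmem⟩
        rw [mem_underprod_iff] at hmem
        rcases hmem with ⟨a, b, hab, e1, e2⟩ | ⟨a, b, hab, e1, e2⟩ | h
        · have hb := b.isLt
          have ha := a.isLt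
          simp at e1 e2
          refine Or.inl ⟨⟨x1, by omega⟩, ⟨x2, by omega⟩,
            ⟨by simp; omega, by simp; omega, ?_⟩, rfl, rfl⟩
          exact mem_congr R hab (by simp; omega) (by simp; omega)
        · simp at e1 e2
          exact Or.inr (Or.inl ⟨a, b, hab, by omega, by omega⟩)
        · simp at h
          exact Or.inr (Or.inr ⟨by omega, by omega⟩)
      · rintro (⟨a, b, ⟨ha1, ha2, hab⟩, e1, e2⟩ | ⟨a, b, hab, e1, e2⟩ | ⟨h1, h2⟩)
        · have ha := a.isLt
          refine ⟨by omega, by omega, ?_⟩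
          rw [mem_underprod_iff]
          exact Or.inl ⟨⟨k + a, ha1⟩, ⟨k + b, ha2⟩, hab, by simp; omega, by simp; omega⟩
        · have ha := a.isLt
          have hb := b.isLt
          refine ⟨by omega, by omega, ?_⟩
          rw [mem_underprod_iff]
          exact Or.inr (Or.inl ⟨a, b, hab, by simp; omega, by simp; omega⟩)
        · refine ⟨by omega, by omega, ?_⟩
          rw [mem_underprod_iff]
          exact Or.inr (Or.inr ⟨by simp; omega, by simp; omega⟩)


end IntegerRelations
end

section
/- Let R ∈ IRel_m and S ∈ IRel_n. (i) If the shifted shuffle R ⧢ S contains at least one integer poset, then R and S are both integer posets. (ii) If R and S are both integer posets, then every element of the convolution R ∗ S is an integer poset. (iii) If the convolution R ∗ S contains at least one integer poset, then R and S are both integer posets. -/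
namespace IntegerRelations

lemma mem_restrict_iff' {p k : ℕ} (T : Set (Fin p × Fin p)) (X : Finset (Fin p))
    (h : X.card = k) (a b : Fin k) :
    (a, b) ∈ restrict T X h ↔
      (((X.orderIsoOfFin h a : Fin p)), ((X.orderIsoOfFin h b : Fin p))) ∈ T := Iff.rfl

lemma exists_preimage' {p k : ℕ} {X : Finset (Fin p)} (h : X.card = k) {x : Fin p}
    (hx : x ∈ X) : ∃ a : Fin k, (X.orderIsoOfFin h a : Fin p) = x :=
  ⟨(X.orderIsoOfFin h).symm ⟨x, hx⟩, by simp⟩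

lemma restrict_isIPos' {p k : ℕ} {T : Set (Fin p × Fin p)} (hT : IsIPos T)
    (X : Finset (Fin p)) (h : X.card = k) : IsIPos (restrict T X h) := by
  obtain ⟨h1, h2, h3⟩ := hT
  refine ⟨fun i => h1 _, fun a b hab hba => ?_, fun a b c hab hbc => h3 _ _ _ hab hbc⟩
  have hv := h2 _ _ hab hba
  exact (X.orderIsoOfFin h).injective (Subtype.ext hv)

/-- posets and the shifted shuffle / convolution. -/
theorem posets_shuffle_convolution (m n : ℕ)
    (R : Set (Fin m × Fin m)) (S : Set (Fin n × Fin n))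
    (hR : IsIRel R) (hS : IsIRel S) :
    ((∃ T ∈ shiftedShuffle R S, IsIPos T) → IsIPos R ∧ IsIPos S) ∧
    ((IsIPos R ∧ IsIPos S) → ∀ T ∈ convolution R S, IsIPos T) ∧
    ((∃ T ∈ convolution R S, IsIPos T) → IsIPos R ∧ IsIPos S) := by
  refine ⟨?_, ?_, ?_⟩
  · rintro ⟨T, ⟨I, D, hI, hD, rfl⟩, hTr, hTa, hTt⟩
    have memL : ∀ a b : Fin m,
        ((Fin.castAdd n a, Fin.castAdd n b) ∈ shiftL R ∪ shiftR S ∪ I ∪ D) ↔ (a, b) ∈ R := by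
      intro a b
      constructor
      · rintro (((⟨y, hy, heq⟩ | ⟨y, hy, heq⟩) | h) | h)
        · have h1 : (a : ℕ) = (y.1 : ℕ) := congrArg (Fin.val ∘ Prod.fst) heq
          have h2 : (b : ℕ) = (y.2 : ℕ) := congrArg (Fin.val ∘ Prod.snd) heq
          have : y = (a, b) := by
            ext <;> simp [← h1, ← h2]
          rwa [this] at hy
        · have h1 : (a : ℕ) = m + (y.1 : ℕ) := congrArg (Fin.val ∘ Prod.fst) heq
          have := a.isLt; omega
        · have := (hI h).2
          simp only [Fin.coe_castAdd] at this
          have := b.isLt; omega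
        · have := (hD h).1
          simp only [Fin.coe_castAdd] at this
          have := a.isLt; omega
      · exact fun h => Or.inl (Or.inl (Or.inl ⟨(a, b), h, rfl⟩))
    have memR : ∀ a b : Fin n,
        ((Fin.natAdd m a, Fin.natAdd m b) ∈ shiftL R ∪ shiftR S ∪ I ∪ D) ↔ (a, b) ∈ S := by
      intro a b
      constructor
      · rintro (((⟨y, hy, heq⟩ | ⟨y, hy, heq⟩) | h) | h)
        · have h1 : m + (a : ℕ) = (y.1 : ℕ) := congrArg (Fin.val ∘ Prod.fst) heq
          have := y.1.isLt; omega
        · have h1 : m + (a : ℕ) = m + (y.1 : ℕ) := congrArg (Fin.val ∘ Prod.fst) heq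
          have h2 : m + (b : ℕ) = m + (y.2 : ℕ) := congrArg (Fin.val ∘ Prod.snd) heq
          have : y = (a, b) := by
            ext <;> simp <;> omega
          rwa [this] at hy
        · have := (hI h).1
          simp only [Fin.coe_natAdd] at this
          omega
        · have := (hD h).2
          simp only [Fin.coe_natAdd] at this
          omega
      · exact fun h => Or.inl (Or.inl (Or.inr ⟨(a, b), h, rfl⟩))
    constructor
    · refine ⟨hR, fun a b hab hba => ?_, fun a b c hab hbc => ?_⟩
      · have := hTa _ _ ((memL a b).2 hab) ((memL b a).2 hba)
        exact Fin.ext (by simpa using congrArg Fin.val this)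
      · exact (memL a c).1 (hTt _ _ _ ((memL a b).2 hab) ((memL b c).2 hbc))
    · refine ⟨hS, fun a b hab hba => ?_, fun a b c hab hbc => ?_⟩
      · have := hTa _ _ ((memR a b).2 hab) ((memR b a).2 hba)
        have hv := congrArg Fin.val this
        simp only [Fin.coe_natAdd] at hv
        exact Fin.ext (by omega)
      · exact (memR a c).1 (hTt _ _ _ ((memR a b).2 hab) ((memR b c).2 hbc))
  · rintro ⟨hRp, hSp⟩ T ⟨X, Y, hX, hY, ⟨hcov, hdisj, hcut⟩, hTX, hTY⟩
    have hXmem : ∀ x ∈ X, ∃ a : Fin m, (X.orderIsoOfFin hX a : Fin (m + n)) = x :=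
      fun x hx => exists_preimage' hX hx
    have hYmem : ∀ y ∈ Y, ∃ a : Fin n, (Y.orderIsoOfFin hY a : Fin (m + n)) = y :=
      fun y hy => exists_preimage' hY hy
    have hXT : ∀ a b : Fin m,
        ((X.orderIsoOfFin hX a : Fin (m + n)), (X.orderIsoOfFin hX b : Fin (m + n))) ∈ T
          ↔ (a, b) ∈ R := by
      intro a b; rw [← hTX]; exact Iff.rfl
    have hYT : ∀ a b : Fin n,
        ((Y.orderIsoOfFin hY a : Fin (m + n)), (Y.orderIsoOfFin hY b : Fin (m + n))) ∈ T
          ↔ (a, b) ∈ S := by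
      intro a b; rw [← hTY]; exact Iff.rfl
    have hXin : ∀ a : Fin m, (X.orderIsoOfFin hX a : Fin (m + n)) ∈ X :=
      fun a => (X.orderIsoOfFin hX a).2
    have hYin : ∀ a : Fin n, (Y.orderIsoOfFin hY a : Fin (m + n)) ∈ Y :=
      fun a => (Y.orderIsoOfFin hY a).2
    refine ⟨?_, ?_, ?_⟩
    · intro i
      rcases hcov i with hi | hi
      · obtain ⟨a, rfl⟩ := hXmem i hi
        exact (hXT a a).2 (hRp.1 a)
      · obtain ⟨a, rfl⟩ := hYmem i hi
        exact (hYT a a).2 (hSp.1 a)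
    · intro a b hab hba
      rcases hcov a with ha | ha <;> rcases hcov b with hb | hb
      · obtain ⟨i, rfl⟩ := hXmem a ha
        obtain ⟨j, rfl⟩ := hXmem b hb
        have := hRp.2.1 _ _ ((hXT i j).1 hab) ((hXT j i).1 hba)
        rw [this]
      · exact absurd hba (hcut a ha b hb).2
      · exact absurd hab (hcut b hb a ha).2
      · obtain ⟨i, rfl⟩ := hYmem a ha
        obtain ⟨j, rfl⟩ := hYmem b hb
        have := hSp.2.1 _ _ ((hYT i j).1 hab) ((hYT j i).1 hba)
        rw [this]
    · intro a b c hab hbc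
      rcases hcov a with ha | ha <;> rcases hcov c with hc | hc
      · -- a ∈ X, c ∈ X
        rcases hcov b with hb | hb
        · obtain ⟨i, rfl⟩ := hXmem a ha
          obtain ⟨j, rfl⟩ := hXmem b hb
          obtain ⟨k, rfl⟩ := hXmem c hc
          exact (hXT i k).2 (hRp.2.2 _ _ _ ((hXT i j).1 hab) ((hXT j k).1 hbc))
        · exact absurd hbc (hcut c hc b hb).2
      · exact (hcut a ha c hc).1
      · -- a ∈ Y, c ∈ X
        rcases hcov b with hb | hb
        · exact absurd hab (hcut b hb a ha).2
        · exact absurd hbc (hcut c hc b hb).2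
      · -- a ∈ Y, c ∈ Y
        rcases hcov b with hb | hb
        · exact absurd hab (hcut b hb a ha).2
        · obtain ⟨i, rfl⟩ := hYmem a ha
          obtain ⟨j, rfl⟩ := hYmem b hb
          obtain ⟨k, rfl⟩ := hYmem c hc
          exact (hYT i k).2 (hSp.2.2 _ _ _ ((hYT i j).1 hab) ((hYT j k).1 hbc))
  · rintro ⟨T, ⟨X, Y, hX, hY, hcut, hTX, hTY⟩, hT⟩
    exact ⟨hTX ▸ restrict_isIPos' hT X hX, hTY ▸ restrict_isIPos' hT Y hY⟩

end IntegerRelations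
end
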